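/- Let n ≥ 4 and τ with 1 < τ < n-2. Suppose G: ℝ^{n-1} × ℝ^{n-1} → ℝ satisfies C₁|x-y|^{3-n} ≤ G(x,y) ≤ C₂|x-y|^{3-n} for all x ≠ y, and f: ℝ^{n-1} → ℝ satisfies |f(y)| ≤ C(1+|y|)^{-τ-1}. Define u(x) = -∫_{ℝ^{n-1}} G(x,y) f(y) dy. Then there exists C' depending only on n, τ, C, C₂ such that |u(x)| ≤ C' |x|^{1-τ} for all |x| ≥ 2. -/

import Mathlib

/-!
Since `(1 + ‖y‖) ^ (-τ - 1) ≤ ‖y‖ ^ (-(τ + 1))`, it suffices to bound the Riesz-type integral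
`∫ ‖x - y‖ ^ (-α) * ‖y‖ ^ (-β) dy` with `α = n - 3`, `β = τ + 1` in dimension `D = n - 1`.
The substitution `y = ‖x‖ • z` turns it into `‖x‖ ^ (D - α - β) = ‖x‖ ^ (1 - τ)` times the
same integral at the unit vector `e = ‖x‖⁻¹ • x`, and that is bounded uniformly in `e`:
near `e` the factor `‖z‖ ^ (-β)` is bounded and `‖e - z‖ ^ (-α)` is integrable because `α < D`;
away from `e` we have `‖e - z‖ ≥ (1 + ‖z‖) / 5`, leaving `(1 + ‖z‖) ^ (-α) * ‖z‖ ^ (-β)`,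
which is integrable because `β < D < α + β`.
-/

open MeasureTheory Metric Module

theorem norm_sub_rpow_neg_mul_norm_rpow_neg_le {E : Type*} [SeminormedAddCommGroup E] {α β : ℝ}
    (hα : 0 ≤ α) (hβ : 0 ≤ β) {e : E} (he : ‖e‖ = 1) (z : E) :
    ‖e - z‖ ^ (-α) * ‖z‖ ^ (-β) ≤
      2 ^ β * (ball (0 : E) (1 / 2)).indicator (fun w ↦ ‖w‖ ^ (-α)) (e - z) +
        5 ^ α * ((1 + ‖z‖) ^ (-α) * ‖z‖ ^ (-β)) := by
  have hfar : 0 ≤ 5 ^ α * ((1 + ‖z‖) ^ (-α) * ‖z‖ ^ (-β)) := by positivity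
  by_cases hez : ‖e - z‖ < 1 / 2
  · have hz : 1 / 2 ≤ ‖z‖ := by linarith [norm_sub_norm_le e z]
    have h1 : ‖z‖ ^ (-β) ≤ 2 ^ β := by
      calc ‖z‖ ^ (-β) ≤ (1 / 2 : ℝ) ^ (-β) :=
            Real.rpow_le_rpow_of_nonpos (by norm_num) hz (neg_nonpos.mpr hβ)
        _ = 2 ^ β := by
            rw [one_div, Real.inv_rpow zero_le_two, ← Real.rpow_neg zero_le_two, neg_neg]
    rw [Set.indicator_of_mem (mem_ball_zero_iff.mpr hez)]
    nlinarith [show 0 ≤ ‖e - z‖ ^ (-α) by positivity]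
  · have hcomp : (1 + ‖z‖) / 5 ≤ ‖e - z‖ := by
      linarith [norm_sub_norm_le z e, norm_sub_rev e z]
    have h1 : ‖e - z‖ ^ (-α) ≤ 5 ^ α * (1 + ‖z‖) ^ (-α) := by
      calc ‖e - z‖ ^ (-α) ≤ ((1 + ‖z‖) / 5) ^ (-α) :=
            Real.rpow_le_rpow_of_nonpos (by positivity) hcomp (neg_nonpos.mpr hα)
        _ = 5 ^ α * (1 + ‖z‖) ^ (-α) := by
            rw [Real.div_rpow (by positivity) (by norm_num), div_eq_mul_inv,
              ← Real.rpow_neg (by norm_num), neg_neg, mul_comm]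
    rw [Set.indicator_of_notMem (by simpa using hez), mul_zero, zero_add, ← mul_assoc]
    exact mul_le_mul_of_nonneg_right h1 (by positivity)

section Riesz

variable {E : Type*} [NormedAddCommGroup E] [NormedSpace ℝ E] [FiniteDimensional ℝ E]
  [MeasurableSpace E] [BorelSpace E] (μ : Measure E) [μ.IsAddHaarMeasure]

theorem lintegral_eq_mul_lintegral_comp_smul (F : E → ENNReal) {r : ℝ} (hr : 0 < r) :
    ∫⁻ y, F y ∂μ = ENNReal.ofReal (r ^ finrank ℝ E) * ∫⁻ z, F (r • z) ∂μ := by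
  have hmap := lintegral_map_equiv F (MeasurableEquiv.smul₀ r hr.ne') (μ := μ)
  rw [show ⇑(MeasurableEquiv.smul₀ r hr.ne' : E ≃ᵐ E) = (r • ·) from rfl] at hmap
  rw [← hmap, Measure.map_addHaar_smul μ hr.ne', lintegral_smul_measure, smul_eq_mul, ← mul_assoc,
    ← ENNReal.ofReal_mul (by positivity), abs_of_pos (by positivity),
    mul_inv_cancel₀ (by positivity), ENNReal.ofReal_one, one_mul]

theorem integrable_indicator_ball_norm_rpow_neg {α : ℝ} (hα₀ : 0 ≤ α)
    (hα : α < finrank ℝ E) (R : ℝ) :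
    Integrable ((ball (0 : E) R).indicator fun w ↦ ‖w‖ ^ (-α)) μ := by
  have hD : 1 ≤ finrank ℝ E := by
    have : (0 : ℝ) < finrank ℝ E := hα₀.trans_lt hα
    exact_mod_cast this
  rw [integrable_indicator_iff measurableSet_ball]
  refine integrableOn_ball_of_norm_le_rpow hD (C := 1) hα (.of_forall fun w ↦ ?_)
    (measurable_norm.pow_const _).aestronglyMeasurable
  rw [one_mul, Real.norm_of_nonneg (by positivity)]

theorem integrable_one_add_norm_rpow_neg_mul_norm_rpow_neg {α β : ℝ} (hα₀ : 0 ≤ α) (hβ₀ : 0 ≤ β)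
    (hβ : β < finrank ℝ E) (hαβ : finrank ℝ E < α + β) :
    Integrable (fun z : E ↦ (1 + ‖z‖) ^ (-α) * ‖z‖ ^ (-β)) μ := by
  refine ((integrable_indicator_ball_norm_rpow_neg μ hβ₀ hβ 1).add
    ((integrable_one_add_norm hαβ).const_mul (2 ^ β))).mono'
    (((measurable_const.add measurable_norm).pow_const _).mul
      (measurable_norm.pow_const _)).aestronglyMeasurable (.of_forall fun z ↦ ?_)
  rw [Real.norm_of_nonneg (by positivity)]
  by_cases hz : ‖z‖ < 1
  · have hz' : z ∈ ball (0 : E) 1 := mem_ball_zero_iff.mpr hz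
    have h1 : (1 + ‖z‖) ^ (-α) ≤ 1 :=
      Real.rpow_le_one_of_one_le_of_nonpos (by linarith [norm_nonneg z]) (neg_nonpos.mpr hα₀)
    have h2 : 0 ≤ 2 ^ β * (1 + ‖z‖) ^ (-(α + β)) := by positivity
    rw [Pi.add_apply, Set.indicator_of_mem hz']
    nlinarith [show 0 ≤ ‖z‖ ^ (-β) by positivity]
  · have hz' : z ∉ ball (0 : E) 1 := by simpa using hz
    have h1 : ‖z‖ ^ (-β) ≤ 2 ^ β * (1 + ‖z‖) ^ (-β) := by
      calc ‖z‖ ^ (-β) ≤ ((1 + ‖z‖) / 2) ^ (-β) :=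
            Real.rpow_le_rpow_of_nonpos (by positivity) (by linarith) (by linarith)
        _ = 2 ^ β * (1 + ‖z‖) ^ (-β) := by
            rw [Real.div_rpow (by positivity) (by norm_num), div_eq_mul_inv,
              ← Real.rpow_neg (by norm_num), neg_neg, mul_comm]
    rw [Pi.add_apply, Set.indicator_of_notMem hz', zero_add, neg_add, Real.rpow_add (by positivity)]
    nlinarith [show 0 ≤ (1 + ‖z‖) ^ (-α) by positivity]

theorem exists_lintegral_norm_sub_rpow_neg_mul_norm_rpow_neg_le {α β : ℝ} (hα₀ : 0 ≤ α)
    (hβ₀ : 0 ≤ β) (hα : α < finrank ℝ E) (hβ : β < finrank ℝ E) (hαβ : finrank ℝ E < α + β) :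
    ∃ K : ℝ, 0 < K ∧ ∀ e : E, ‖e‖ = 1 →
      ∫⁻ z, ENNReal.ofReal (‖e - z‖ ^ (-α) * ‖z‖ ^ (-β)) ∂μ ≤ ENNReal.ofReal K := by
  set near : E → ℝ := fun w ↦ 2 ^ β * (ball (0 : E) (1 / 2)).indicator (fun v ↦ ‖v‖ ^ (-α)) w
  set far : E → ℝ := fun z ↦ 5 ^ α * ((1 + ‖z‖) ^ (-α) * ‖z‖ ^ (-β))
  have hnear : Integrable near μ :=
    (integrable_indicator_ball_norm_rpow_neg μ hα₀ hα _).const_mul _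
  have hfar : Integrable far μ :=
    (integrable_one_add_norm_rpow_neg_mul_norm_rpow_neg μ hα₀ hβ₀ hβ hαβ).const_mul _
  refine ⟨max (∫ w, near w ∂μ + ∫ z, far z ∂μ) 1, by positivity, fun e he ↦ ?_⟩
  have hnear₀ : 0 ≤ near := fun w ↦
    mul_nonneg (by positivity) (Set.indicator_nonneg (fun _ _ ↦ by positivity) _)
  have hsum : Integrable (fun z ↦ near (e - z) + far z) μ := (hnear.comp_sub_left e).add hfar
  calc ∫⁻ z, ENNReal.ofReal (‖e - z‖ ^ (-α) * ‖z‖ ^ (-β)) ∂μ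
      ≤ ∫⁻ z, ENNReal.ofReal (near (e - z) + far z) ∂μ :=
        lintegral_mono fun z ↦ ENNReal.ofReal_le_ofReal
          (norm_sub_rpow_neg_mul_norm_rpow_neg_le hα₀ hβ₀ he z)
    _ = ENNReal.ofReal (∫ w, near w ∂μ + ∫ z, far z ∂μ) := by
        rw [← ofReal_integral_eq_lintegral_ofReal hsum
            (.of_forall fun z ↦ add_nonneg (hnear₀ _) (by positivity)),
          integral_add (hnear.comp_sub_left e) hfar, integral_sub_left_eq_self]
    _ ≤ _ := ENNReal.ofReal_le_ofReal (le_max_left _ _)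

theorem exists_lintegral_norm_sub_rpow_neg_mul_norm_rpow_neg_le_mul_rpow {α β : ℝ} (hα₀ : 0 ≤ α)
    (hβ₀ : 0 ≤ β) (hα : α < finrank ℝ E) (hβ : β < finrank ℝ E) (hαβ : finrank ℝ E < α + β) :
    ∃ K : ℝ, 0 < K ∧ ∀ x : E, x ≠ 0 →
      ∫⁻ y, ENNReal.ofReal (‖x - y‖ ^ (-α) * ‖y‖ ^ (-β)) ∂μ ≤
        ENNReal.ofReal (K * ‖x‖ ^ ((finrank ℝ E : ℝ) - α - β)) := by
  obtain ⟨K, hK, hunit⟩ :=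
    exists_lintegral_norm_sub_rpow_neg_mul_norm_rpow_neg_le μ hα₀ hβ₀ hα hβ hαβ
  refine ⟨K, hK, fun x hx ↦ ?_⟩
  set r := ‖x‖
  have hr : 0 < r := norm_pos_iff.mpr hx
  set e := r⁻¹ • x
  have he : ‖e‖ = 1 := by rw [norm_smul, norm_inv, norm_norm, inv_mul_cancel₀ hr.ne']
  have hxe : x = r • e := by rw [smul_inv_smul₀ hr.ne']
  have hscale : ∀ z : E, ‖x - r • z‖ ^ (-α) * ‖r • z‖ ^ (-β) =
      r ^ (-α - β) * (‖e - z‖ ^ (-α) * ‖z‖ ^ (-β)) := fun z ↦ by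
    rw [hxe, ← smul_sub, norm_smul, norm_smul, Real.norm_of_nonneg hr.le,
      Real.mul_rpow hr.le (norm_nonneg _), Real.mul_rpow hr.le (norm_nonneg _),
      show -α - β = -α + -β by ring, Real.rpow_add hr]
    ring
  calc ∫⁻ y, ENNReal.ofReal (‖x - y‖ ^ (-α) * ‖y‖ ^ (-β)) ∂μ
      = ENNReal.ofReal (r ^ finrank ℝ E) * (ENNReal.ofReal (r ^ (-α - β)) *
          ∫⁻ z, ENNReal.ofReal (‖e - z‖ ^ (-α) * ‖z‖ ^ (-β)) ∂μ) := by
        rw [lintegral_eq_mul_lintegral_comp_smul μ _ hr]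
        simp_rw [hscale, ENNReal.ofReal_mul (Real.rpow_nonneg hr.le _)]
        rw [lintegral_const_mul' _ _ ENNReal.ofReal_ne_top]
    _ ≤ ENNReal.ofReal (r ^ finrank ℝ E) * (ENNReal.ofReal (r ^ (-α - β)) * ENNReal.ofReal K) := by
        gcongr
        exact hunit e he
    _ = ENNReal.ofReal (K * r ^ ((finrank ℝ E : ℝ) - α - β)) := by
        rw [← ENNReal.ofReal_mul (by positivity), ← ENNReal.ofReal_mul (by positivity),
          ← Real.rpow_natCast, ← mul_assoc, ← Real.rpow_add hr]
        ring_nf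

theorem exists_norm_integral_le_mul_rpow_of_norm_le {F : Type*} [NormedAddCommGroup F]
    [NormedSpace ℝ F] {α β : ℝ} (hα₀ : 0 ≤ α) (hβ₀ : 0 ≤ β) (hα : α < finrank ℝ E)
    (hβ : β < finrank ℝ E) (hαβ : finrank ℝ E < α + β) :
    ∃ K : ℝ, 0 < K ∧ ∀ x : E, x ≠ 0 → ∀ (g : E → F) (M : ℝ), 0 ≤ M →
      (∀ᵐ y ∂μ, ‖g y‖ ≤ M * (‖x - y‖ ^ (-α) * ‖y‖ ^ (-β))) →
        ‖∫ y, g y ∂μ‖ ≤ M * K * ‖x‖ ^ ((finrank ℝ E : ℝ) - α - β) := by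
  obtain ⟨K, hK, hriesz⟩ :=
    exists_lintegral_norm_sub_rpow_neg_mul_norm_rpow_neg_le_mul_rpow μ hα₀ hβ₀ hα hβ hαβ
  refine ⟨K, hK, fun x hx g M hM hg ↦ ?_⟩
  refine (norm_integral_le_lintegral_norm _).trans
    (ENNReal.toReal_le_of_le_ofReal (by positivity) ?_)
  calc ∫⁻ y, ENNReal.ofReal ‖g y‖ ∂μ
      ≤ ∫⁻ y, ENNReal.ofReal M * ENNReal.ofReal (‖x - y‖ ^ (-α) * ‖y‖ ^ (-β)) ∂μ :=
        lintegral_mono_ae <| hg.mono fun y hy ↦ by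
          rw [← ENNReal.ofReal_mul hM]
          exact ENNReal.ofReal_le_ofReal hy
    _ = ENNReal.ofReal M * ∫⁻ y, ENNReal.ofReal (‖x - y‖ ^ (-α) * ‖y‖ ^ (-β)) ∂μ :=
        lintegral_const_mul' _ _ ENNReal.ofReal_ne_top
    _ ≤ ENNReal.ofReal M * ENNReal.ofReal (K * ‖x‖ ^ ((finrank ℝ E : ℝ) - α - β)) := by
        gcongr
        exact hriesz x hx
    _ = ENNReal.ofReal (M * K * ‖x‖ ^ ((finrank ℝ E : ℝ) - α - β)) := by
        rw [← ENNReal.ofReal_mul hM, mul_assoc]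

end Riesz

/-- Green-function decay estimate (from the proof of Lemma 3.11): if
`C₁|x-y|^{3-n} ≤ G(x,y) ≤ C₂|x-y|^{3-n}` and `|f(y)| ≤ C(1+|y|)^{-τ-1}` with
`1 < τ < n-2`, then `u(x) = -∫ G(x,y) f(y) dy` satisfies
`|u(x)| ≤ C'|x|^{1-τ}` for `|x| ≥ 2`, with `C'` depending only on
`n, τ, C, C₂`. -/
theorem stmt4 (n : ℕ) (hn : 4 ≤ n) (τ : ℝ) (hτ1 : 1 < τ) (hτ2 : τ < (n : ℝ) - 2)
    (C C₁ C₂ : ℝ) (hC : 0 < C) (hC₁ : 0 < C₁) (hC₂ : 0 < C₂) :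
    ∃ C' : ℝ, 0 < C' ∧
      ∀ (G : EuclideanSpace ℝ (Fin (n - 1)) → EuclideanSpace ℝ (Fin (n - 1)) → ℝ)
        (f : EuclideanSpace ℝ (Fin (n - 1)) → ℝ),
        Measurable f →
        (∀ x, Measurable (G x)) →
        (∀ x y, x ≠ y → C₁ * ‖x - y‖ ^ ((3 : ℝ) - n) ≤ G x y ∧
          G x y ≤ C₂ * ‖x - y‖ ^ ((3 : ℝ) - n)) →
        (∀ y, |f y| ≤ C * (1 + ‖y‖) ^ (-τ - 1)) →
        ∀ x : EuclideanSpace ℝ (Fin (n - 1)), 2 ≤ ‖x‖ →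
          |-∫ y, G x y * f y| ≤ C' * ‖x‖ ^ (1 - τ) := by
  have hdim : finrank ℝ (EuclideanSpace ℝ (Fin (n - 1))) = n - 1 := finrank_euclideanSpace_fin
  have hD : (finrank ℝ (EuclideanSpace ℝ (Fin (n - 1))) : ℝ) = n - 1 := by
    rw [hdim, Nat.cast_sub (by omega), Nat.cast_one]
  have : Nontrivial (EuclideanSpace ℝ (Fin (n - 1))) :=
    Module.nontrivial_of_finrank_pos (R := ℝ) (by omega)
  obtain ⟨K, hK, hriesz⟩ := exists_norm_integral_le_mul_rpow_of_norm_le (F := ℝ)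
    (volume : Measure (EuclideanSpace ℝ (Fin (n - 1)))) (α := n - 3) (β := τ + 1)
    (by linarith) (by linarith) (by linarith) (by linarith) (by linarith)
  refine ⟨C₂ * C * K, by positivity, fun G f _ _ hG hf x hx ↦ ?_⟩
  have hGf : ∀ᵐ y, ‖G x y * f y‖ ≤ C₂ * C * (‖x - y‖ ^ (-((n : ℝ) - 3)) * ‖y‖ ^ (-(τ + 1))) := by
    filter_upwards [volume.ae_ne x, volume.ae_ne 0] with y hyx hy0
    obtain ⟨hlow, hup⟩ := hG x y hyx.symm
    have hGabs : |G x y| ≤ C₂ * ‖x - y‖ ^ ((3 : ℝ) - n) := by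
      rwa [abs_of_nonneg ((by positivity : (0 : ℝ) ≤ C₁ * _).trans hlow)]
    have hfabs : |f y| ≤ C * ‖y‖ ^ (-(τ + 1)) := (hf y).trans <| by
      rw [neg_add']
      exact mul_le_mul_of_nonneg_left (Real.rpow_le_rpow_of_nonpos (norm_pos_iff.mpr hy0)
        (by linarith) (by linarith)) hC.le
    rw [Real.norm_eq_abs, abs_mul, neg_sub, mul_mul_mul_comm]
    exact mul_le_mul hGabs hfabs (abs_nonneg _) (by positivity)
  have hbound := hriesz x (norm_pos_iff.mp (by linarith)) _ _ (by positivity) hGf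
  rw [hD, show (n : ℝ) - 1 - (n - 3) - (τ + 1) = 1 - τ by ring] at hbound
  rwa [abs_neg, ← Real.norm_eq_abs]
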